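/- arXiv:quant-ph/0604190 — 3 statements merged into one kernel-verified Lean document; each statement's English description precedes it below -/
import Mathlib

section
/- Let ρ₀ be a 4×4 complex hermitian matrix indexed by Fin 2 × Fin 2 with trace 1, such that ρ₀ is positive definite and det(ρ₀^Γ) = 0. Then rank(ρ₀^Γ) = 3; that is, 0 is an eigenvalue of ρ₀^Γ of multiplicity exactly one, so ρ₀ is a smooth point of the hypersurface D^Γ = {ρ hermitian, tr ρ = 1, det ρ^Γ = 0}. -/
/-!
A kernel of `ρ₀^Γ` of dimension at least two would contain a nonzero product vector `e ⊗ f`: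
reading vectors of `ℂ² ⊗ ℂ²` as `2 × 2` matrices, the determinant is a quadratic form, which has
a nontrivial zero on every plane over `ℂ`, and a nonzero singular `2 × 2` matrix has rank one.
But the partial transpose acts on product vectors by conjugating the second factor, so
`⟪e ⊗ f, ρ₀^Γ (e ⊗ f)⟫ = ⟪e ⊗ f̄, ρ₀ (e ⊗ f̄)⟫ > 0`. Hence the kernel, which is nonzero because
`det ρ₀^Γ = 0`, is a line.
-/

open scoped ComplexOrder

/-- Partial transpose with respect to the second tensor factor:
`(ρ^Γ)_{(i,j),(k,l)} = ρ_{(i,l),(k,j)}`. -/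
def partialTranspose (ρ : Matrix (Fin 2 × Fin 2) (Fin 2 × Fin 2) ℂ) :
    Matrix (Fin 2 × Fin 2) (Fin 2 × Fin 2) ℂ :=
  fun p q => ρ (p.1, q.2) (q.1, p.2)

open Matrix Module Polynomial

lemma IsAlgClosed.exists_quadratic_eq_zero {K : Type*} [Field K] [IsAlgClosed K] {a : K}
    (ha : a ≠ 0) (b c : K) : ∃ t, a * t ^ 2 + b * t + c = 0 := by
  obtain ⟨t, ht⟩ := IsAlgClosed.exists_root (C a * X ^ 2 + C b * X + C c)
    (by rw [degree_quadratic ha]; decide)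
  exact ⟨t, by simpa using ht⟩

theorem QuadraticMap.exists_ne_zero_eq_zero_of_one_lt_finrank {K V : Type*} [Field K]
    [IsAlgClosed K] [AddCommGroup V] [Module K V] [FiniteDimensional K V]
    (Q : QuadraticForm K V) (hV : 1 < finrank K V) : ∃ v ≠ 0, Q v = 0 := by
  obtain ⟨y, hy⟩ := Module.finrank_pos_iff_exists_ne_zero.mp (zero_lt_one.trans hV)
  by_cases hQy : Q y = 0
  · exact ⟨y, hy, hQy⟩
  obtain ⟨x, hxy⟩ := exists_linearIndependent_pair_of_one_lt_finrank hV hy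
  obtain ⟨t, ht⟩ := IsAlgClosed.exists_quadratic_eq_zero hQy (polar Q x y) (Q x)
  refine ⟨x + t • y, fun h => ?_, ?_⟩
  · have := (LinearIndependent.pair_iff.mp hxy) t 1 (by rw [← h, one_smul, add_comm])
    exact one_ne_zero this.2
  · rw [QuadraticMap.map_add Q, QuadraticMap.map_smul, polar_smul_right]
    simp only [smul_eq_mul] at ht ⊢
    linear_combination ht

lemma Matrix.rank_add_finrank_ker_mulVecLin {m n K : Type*} [Fintype m] [Fintype n] [Field K]
    (A : Matrix m n K) : A.rank + finrank K (LinearMap.ker A.mulVecLin) = Fintype.card n := by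
  rw [Matrix.rank, LinearMap.finrank_range_add_finrank_ker, Module.finrank_fintype_fun_eq_card]

lemma Matrix.rank_lt_card_of_det_eq_zero {n K : Type*} [Fintype n] [DecidableEq n] [Field K]
    {A : Matrix n n K} (hA : A.det = 0) : A.rank < Fintype.card n := by
  obtain ⟨v, hv, hAv⟩ := exists_mulVec_eq_zero_iff.mpr hA
  have : 0 < finrank K (LinearMap.ker A.mulVecLin) :=
    Module.finrank_pos_iff_exists_ne_zero.mpr ⟨⟨v, hAv⟩, fun h => hv (congrArg Subtype.val h)⟩
  have := A.rank_add_finrank_ker_mulVecLin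
  omega

lemma Matrix.exists_eq_vecMulVec_of_rank_le_one {m n K : Type*} [Fintype m] [Fintype n]
    [DecidableEq n] [Field K] {A : Matrix m n K} (hA : A.rank ≤ 1) :
    ∃ u v, A = vecMulVec u v := by
  obtain ⟨w, hw⟩ := finrank_le_one_iff.mp hA
  choose c hc using fun j => hw ⟨A.col j, by
    simpa using LinearMap.mem_range_self A.mulVecLin (Pi.single j 1)⟩
  refine ⟨w, c, ext fun i j => ?_⟩
  simpa [vecMulVec_apply, mul_comm] using congrFun (congrArg Subtype.val (hc j)).symm i

def detForm (K : Type*) [CommRing K] : QuadraticForm K (Fin 2 × Fin 2 → K) :=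
  QuadraticMap.linMulLin (LinearMap.proj (0, 0)) (LinearMap.proj (1, 1)) -
    QuadraticMap.linMulLin (LinearMap.proj (0, 1)) (LinearMap.proj (1, 0))

lemma detForm_apply {K : Type*} [CommRing K] (z : Fin 2 × Fin 2 → K) :
    detForm K z = (of (Function.curry z)).det := by
  simp [detForm, det_fin_two]

def tensorVec {m n R : Type*} [Mul R] (e : m → R) (f : n → R) : m × n → R :=
  fun p => e p.1 * f p.2

@[simp] lemma tensorVec_eq_zero {m n R : Type*} [MulZeroClass R] [NoZeroDivisors R]
    {e : m → R} {f : n → R} : tensorVec e f = 0 ↔ e = 0 ∨ f = 0 := by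
  simp only [funext_iff, Prod.forall, tensorVec, Pi.zero_apply, mul_eq_zero, forall_or_left,
    forall_or_right]

lemma exists_tensorVec_mem {K : Type*} [Field K] [IsAlgClosed K]
    (W : Submodule K (Fin 2 × Fin 2 → K)) (hW : 1 < finrank K W) :
    ∃ e f : Fin 2 → K, e ≠ 0 ∧ f ≠ 0 ∧ tensorVec e f ∈ W := by
  obtain ⟨⟨z, hzW⟩, hz, hQz⟩ :=
    ((detForm K).comp W.subtype).exists_ne_zero_eq_zero_of_one_lt_finrank hW
  have hrank : (of (Function.curry z)).rank ≤ 1 := by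
    have := rank_lt_card_of_det_eq_zero (detForm_apply z ▸ hQz)
    simp only [Fintype.card_fin] at this
    omega
  obtain ⟨e, f, hef⟩ := exists_eq_vecMulVec_of_rank_le_one hrank
  have hz' : tensorVec e f = z := funext fun p => (congrFun (congrFun hef p.1) p.2).symm
  have hne : tensorVec e f ≠ 0 := by
    rw [hz']
    exact fun h => hz (Subtype.ext h)
  rw [Ne, tensorVec_eq_zero, not_or] at hne
  exact ⟨e, f, hne.1, hne.2, hz' ▸ hzW⟩

lemma star_dotProduct_partialTranspose_mulVec_tensorVec
    (ρ : Matrix (Fin 2 × Fin 2) (Fin 2 × Fin 2) ℂ) (e f : Fin 2 → ℂ) :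
    star (tensorVec e f) ⬝ᵥ (partialTranspose ρ *ᵥ tensorVec e f) =
      star (tensorVec e (star f)) ⬝ᵥ (ρ *ᵥ tensorVec e (star f)) := by
  simp only [dotProduct, Pi.star_apply, tensorVec, star_mul', RCLike.star_def, mulVec,
    partialTranspose, Fintype.sum_prod_type, Fin.sum_univ_two, RingHomCompTriple.comp_apply,
    RingHom.id_apply]
  ring

lemma Matrix.PosDef.partialTranspose_mulVec_tensorVec_ne_zero
    {ρ : Matrix (Fin 2 × Fin 2) (Fin 2 × Fin 2) ℂ} (hρ : ρ.PosDef) {e f : Fin 2 → ℂ}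
    (he : e ≠ 0) (hf : f ≠ 0) : partialTranspose ρ *ᵥ tensorVec e f ≠ 0 := by
  intro h
  have := hρ.dotProduct_mulVec_pos (x := tensorVec e (star f)) (by simp [he, hf])
  rw [← star_dotProduct_partialTranspose_mulVec_tensorVec, h, dotProduct_zero] at this
  exact this.false

theorem rank_partialTranspose_of_posDef_general
    (ρ₀ : Matrix (Fin 2 × Fin 2) (Fin 2 × Fin 2) ℂ)
    (hpos : ρ₀.PosDef) (hdet : (partialTranspose ρ₀).det = 0) :
    (partialTranspose ρ₀).rank = 3 := by
  have hrank := rank_lt_card_of_det_eq_zero hdet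
  have hnullity := (partialTranspose ρ₀).rank_add_finrank_ker_mulVecLin
  have hker : finrank ℂ (LinearMap.ker (partialTranspose ρ₀).mulVecLin) ≤ 1 := by
    by_contra! h
    obtain ⟨e, f, he, hf, hmem⟩ := exists_tensorVec_mem _ h
    exact hpos.partialTranspose_mulVec_tensorVec_ne_zero he hf hmem
  simp only [Fintype.card_prod, Fintype.card_fin] at hrank hnullity
  omega

/-- If a two-qubit state `ρ₀` (hermitian, trace 1) is positive definite and
`det ρ₀^Γ = 0`, then `rank ρ₀^Γ = 3`, i.e. `0` is an eigenvalue of `ρ₀^Γ` of multiplicity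
exactly one, so `ρ₀` is a smooth point of the hypersurface `D^Γ`. -/
theorem rank_partialTranspose_of_posDef
    (ρ₀ : Matrix (Fin 2 × Fin 2) (Fin 2 × Fin 2) ℂ)
    (hherm : ρ₀.IsHermitian) (htr : ρ₀.trace = 1)
    (hpos : ρ₀.PosDef) (hdet : (partialTranspose ρ₀).det = 0) :
    (partialTranspose ρ₀).rank = 3 :=
  rank_partialTranspose_of_posDef_general ρ₀ hpos hdet
end

section
/- Let ρ₀ be a 4×4 complex hermitian matrix indexed by Fin 2 × Fin 2 with trace 1, such that ρ₀^Γ is positive definite and det ρ₀ = 0. Then rank ρ₀ = 3; that is, 0 is an eigenvalue of ρ₀ of multiplicity exactly one, so ρ₀ is a smooth point of the hypersurface D = {ρ hermitian, tr ρ = 1, det ρ = 0}. -/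
open scoped ComplexOrder

/-!
The quadratic form of `ρ^Γ` at `a ⊗ b̄` equals that of `ρ` at `a ⊗ b`, so positive
definiteness of `ρ^Γ` forbids nonzero product vectors in `ker ρ`. Reading vectors of
`ℂ² ⊗ ℂ²` as `2 × 2` matrices, product vectors are exactly the singular ones, and every
pencil `s V + t W` of complex square matrices contains a singular member. Hence `ker ρ`,
which is nonzero since `det ρ = 0`, has dimension at most one.
-/

open Matrix Module

namespace Matrix

variable {K n : Type*} [Field K] [Fintype n] [DecidableEq n]

theorem exists_det_smul_add_smul_eq_zero [IsAlgClosed K] [Nonempty n] (V W : Matrix n n K) :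
    ∃ s t : K, (s, t) ≠ 0 ∧ (s • V + t • W).det = 0 := by
  by_cases hW : W.det = 0
  · exact ⟨0, 1, by simp, by simpa using hW⟩
  obtain ⟨t, ht⟩ := IsAlgClosed.exists_root (-(W⁻¹ * V)).charpoly
    (by rw [charpoly_degree_eq_dim]; exact_mod_cast Fintype.card_ne_zero)
  have hpencil : V + t • W = W * (W⁻¹ * V + scalar n t) := by
    rw [mul_add, ← mul_assoc, mul_nonsing_inv _ (isUnit_iff_ne_zero.mpr hW), one_mul,
      scalar_apply, ← smul_one_eq_diagonal, mul_smul_comm, mul_one]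
  refine ⟨1, t, by simp, ?_⟩
  rw [one_smul, hpencil, det_mul, ← neg_neg (W⁻¹ * V), ← sub_eq_neg_add, ← eval_charpoly]
  rw [Polynomial.IsRoot.def.mp ht, mul_zero]

theorem exists_eq_vecMulVec_of_det_eq_zero {M : Matrix (Fin 2) (Fin 2) K} (h : M.det = 0) :
    ∃ a b : Fin 2 → K, M = vecMulVec a b := by
  by_cases hM : M = 0
  · exact ⟨0, 0, by simp [hM]⟩
  obtain ⟨i₀, l₀, hM₀⟩ : ∃ i l, M i l ≠ 0 := by
    by_contra! h0
    exact hM (ext h0)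
  refine ⟨fun i => M i l₀ / M i₀ l₀, M i₀, ext fun i l => ?_⟩
  rw [vecMulVec_apply, div_mul_eq_mul_div, eq_div_iff hM₀]
  rw [det_fin_two] at h
  fin_cases i₀ <;> fin_cases l₀ <;> fin_cases i <;> fin_cases l <;> simp <;>
    first | ring1 | linear_combination h | linear_combination -h

end Matrix

theorem Submodule.exists_det_curry_eq_zero_of_two_le_finrank {K n : Type*} [Field K]
    [IsAlgClosed K] [Fintype n] [DecidableEq n] [Nonempty n]
    (S : Submodule K (n × n → K)) (hS : 2 ≤ finrank K S) :
    ∃ u ∈ S, u ≠ 0 ∧ (of (Function.curry u)).det = 0 := by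
  obtain ⟨f, hf⟩ := exists_linearIndependent_of_le_finrank hS
  obtain ⟨s, t, hst, hdet⟩ := exists_det_smul_add_smul_eq_zero
    (of (Function.curry (f 0 : n × n → K))) (of (Function.curry (f 1 : n × n → K)))
  refine ⟨s • f 0 + t • f 1, S.add_mem (S.smul_mem s (f 0).2) (S.smul_mem t (f 1).2), ?_,
    hdet⟩
  have hpair : LinearIndependent K ![(f 0 : n × n → K), f 1] := by
    have h := hf.map' S.subtype S.ker_subtype
    rwa [show S.subtype ∘ f = ![(f 0 : n × n → K), f 1] by ext i : 1; fin_cases i <;> rfl] at h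
  intro h0
  exact hst (Prod.mk_eq_zero.mpr (LinearIndependent.pair_iff.mp hpair s t h0))

theorem partialTranspose_dotProduct_mulVec_productVector
    (ρ : Matrix (Fin 2 × Fin 2) (Fin 2 × Fin 2) ℂ) (a b : Fin 2 → ℂ) :
    star (fun p : Fin 2 × Fin 2 => a p.1 * star (b p.2)) ⬝ᵥ
        partialTranspose ρ *ᵥ (fun p => a p.1 * star (b p.2)) =
      star (fun p : Fin 2 × Fin 2 => a p.1 * b p.2) ⬝ᵥ ρ *ᵥ (fun p => a p.1 * b p.2) := by
  simp only [dotProduct, mulVec, partialTranspose, Fintype.sum_prod_type, Fin.sum_univ_two,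
    Pi.star_apply, star_mul', star_star]
  ring

theorem det_curry_ne_zero_of_mulVec_eq_zero {ρ : Matrix (Fin 2 × Fin 2) (Fin 2 × Fin 2) ℂ}
    (hpos : (partialTranspose ρ).PosDef) {u : Fin 2 × Fin 2 → ℂ} (hu : ρ *ᵥ u = 0)
    (hu₀ : u ≠ 0) : (of (Function.curry u)).det ≠ 0 := by
  intro hdet
  obtain ⟨a, b, hab⟩ := exists_eq_vecMulVec_of_det_eq_zero hdet
  have hu_eq : u = fun p => a p.1 * b p.2 := funext fun p => congrFun (congrFun hab p.1) p.2
  have hx : (fun p : Fin 2 × Fin 2 => a p.1 * star (b p.2)) ≠ 0 := by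
    contrapose! hu₀
    ext p
    simpa [hu_eq] using congrFun hu₀ p
  have hlt := hpos.dotProduct_mulVec_pos hx
  rw [partialTranspose_dotProduct_mulVec_productVector, ← hu_eq, hu, dotProduct_zero] at hlt
  exact hlt.false

theorem rank_of_partialTranspose_posDef_general
    (ρ₀ : Matrix (Fin 2 × Fin 2) (Fin 2 × Fin 2) ℂ)
    (hpos : (partialTranspose ρ₀).PosDef) (hdet : ρ₀.det = 0) :
    ρ₀.rank = 3 := by
  have hker_pos : 0 < finrank ℂ (LinearMap.ker ρ₀.mulVecLin) := by
    obtain ⟨v, hv₀, hv⟩ := exists_mulVec_eq_zero_iff.mpr hdet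
    exact finrank_pos_iff_exists_ne_zero.mpr ⟨⟨v, hv⟩, Subtype.coe_ne_coe.mp hv₀⟩
  have hker_le : finrank ℂ (LinearMap.ker ρ₀.mulVecLin) ≤ 1 := by
    by_contra! h
    obtain ⟨u, hu, hu₀, hsing⟩ := Submodule.exists_det_curry_eq_zero_of_two_le_finrank _ h
    exact det_curry_ne_zero_of_mulVec_eq_zero hpos hu hu₀ hsing
  have hrank_nullity := ρ₀.mulVecLin.finrank_range_add_finrank_ker
  simp only [finrank_fintype_fun_eq_card, Fintype.card_prod, Fintype.card_fin] at hrank_nullity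
  rw [Matrix.rank]
  omega

/-- If `ρ₀` is a `4×4` hermitian matrix of trace 1 such that `ρ₀^Γ` is positive
definite and `det ρ₀ = 0`, then `rank ρ₀ = 3`, i.e. `0` is an eigenvalue of `ρ₀` of
multiplicity exactly one, so `ρ₀` is a smooth point of the hypersurface `D`. -/
theorem rank_of_partialTranspose_posDef
    (ρ₀ : Matrix (Fin 2 × Fin 2) (Fin 2 × Fin 2) ℂ)
    (hherm : ρ₀.IsHermitian) (htr : ρ₀.trace = 1)
    (hpos : (partialTranspose ρ₀).PosDef) (hdet : ρ₀.det = 0) :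
    ρ₀.rank = 3 :=
  rank_of_partialTranspose_posDef_general ρ₀ hpos hdet
end

section
/- For every 4×4 complex matrix ρ indexed by Fin 2 × Fin 2 and all 2×2 unitary matrices U, V, one has det( ((U⊗V) ρ (U⊗V)†)^Γ ) = det( ρ^Γ ); that is, the polynomial function ρ ↦ det ρ^Γ is invariant under the group of local unitary transformations. -/
open Kronecker
open scoped Matrix

/-! Partial transposition turns the local transformation `ρ ↦ (A ⊗ B) ρ (C ⊗ D)` into
`X ↦ (A ⊗ Dᵀ) X (C ⊗ Bᵀ)`, whose determinant factor is `det (A C) ^ 2 * det (B D) ^ 2`;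
for `C = Uᴴ`, `D = Vᴴ` with `U`, `V` unitary this factor is `1`. -/

theorem partialTranspose_kronecker_mul_mul (ρ : Matrix (Fin 2 × Fin 2) (Fin 2 × Fin 2) ℂ)
    (A B C D : Matrix (Fin 2) (Fin 2) ℂ) :
    partialTranspose ((A ⊗ₖ B) * ρ * (C ⊗ₖ D))
      = (A ⊗ₖ Dᵀ) * partialTranspose ρ * (C ⊗ₖ Bᵀ) := by
  ext ⟨i, j⟩ ⟨k, l⟩
  simp only [partialTranspose, Matrix.mul_apply, Matrix.kroneckerMap_apply,
    Matrix.transpose_apply, Fintype.sum_prod_type, Fin.sum_univ_two]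
  ring

theorem det_partialTranspose_kronecker_mul_mul
    (ρ : Matrix (Fin 2 × Fin 2) (Fin 2 × Fin 2) ℂ) (A B C D : Matrix (Fin 2) (Fin 2) ℂ) :
    (partialTranspose ((A ⊗ₖ B) * ρ * (C ⊗ₖ D))).det
      = (A * C).det ^ 2 * (B * D).det ^ 2 * (partialTranspose ρ).det := by
  rw [partialTranspose_kronecker_mul_mul, Matrix.det_mul, Matrix.det_mul,
    mul_right_comm, ← Matrix.det_mul, ← Matrix.mul_kronecker_mul, ← Matrix.transpose_mul,
    Matrix.det_kronecker, Matrix.det_transpose]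
  simp only [Fintype.card_fin]

/-- the function `ρ ↦ det ρ^Γ` is invariant under local unitary
transformations `ρ ↦ (U⊗V) ρ (U⊗V)†` for `2×2` unitary matrices `U, V`. -/
theorem det_partialTranspose_local_unitary_invariant
    (ρ : Matrix (Fin 2 × Fin 2) (Fin 2 × Fin 2) ℂ)
    (U V : Matrix (Fin 2) (Fin 2) ℂ)
    (hU : U * Uᴴ = 1) (hV : V * Vᴴ = 1) :
    (partialTranspose ((U ⊗ₖ V) * ρ * (U ⊗ₖ V)ᴴ)).det = (partialTranspose ρ).det := by
  rw [Matrix.conjTranspose_kronecker, det_partialTranspose_kronecker_mul_mul, hU, hV,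
    Matrix.det_one, one_pow, one_mul, one_mul]
end
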